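/- Let K be a compact convex body in ℝ^d with B(0,r) ⊆ K ⊆ B(0,R), μ_K its Gauss curvature measure, σ the uniform probability measure on S^{d-1}, and c(x,n) = −ln(max(0,⟨x,n⟩)). Then every c-optimal transport plan γ ∈ Γ(σ, μ_K) is supported on D_ε = {(x,n) : d(x,n) ≤ π/2 − ε}, where ε = π/2 − arccos(r/R) > 0 and d is the geodesic distance. Equivalently, ⟨x,n⟩ ≥ r/R on the support of γ. -/

import Mathlib

open MeasureTheory
open scoped RealInnerProductSpace

/-- The uniform probability measure on the unit sphere of `ℝ^d`, i.e. the normalized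
`(d-1)`-dimensional Hausdorff measure. -/
noncomputable def uniformSphere (d : ℕ) : Measure (EuclideanSpace ℝ (Fin d)) :=
  ((μH[(d : ℝ) - 1] (Metric.sphere (0 : EuclideanSpace ℝ (Fin d)) 1))⁻¹ : ENNReal) •
    (μH[(d : ℝ) - 1] : Measure (EuclideanSpace ℝ (Fin d))).restrict
      (Metric.sphere (0 : EuclideanSpace ℝ (Fin d)) 1)

/-- The radial function of a convex body. -/
noncomputable def radialFn {d : ℕ} (K : Set (EuclideanSpace ℝ (Fin d)))
    (x : EuclideanSpace ℝ (Fin d)) : ℝ :=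
  sSup {s : ℝ | s • x ∈ K}

/-- The Gauss curvature prescription cost `c(x,n) = -ln(max(0,⟨x,n⟩))`, with value `+∞`
encoded in `ℝ≥0∞`. -/
noncomputable def gaussCost {d : ℕ} (x n : EuclideanSpace ℝ (Fin d)) : ENNReal :=
  if ⟪x, n⟫ ≤ 0 then ⊤ else ENNReal.ofReal (-Real.log ⟪x, n⟫)

/-- The (topological) support of a measure. -/
def msupport {X : Type*} [TopologicalSpace X] [MeasurableSpace X] (γ : Measure X) : Set X :=
  {p | ∀ U : Set X, IsOpen U → p ∈ U → 0 < γ U}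

/-!
With `h_K` the support function and `ρ_K` the radial function, the potentials `log (R / h_K n)`
and `log (ρ_K x / r)` have sum at most `c(n, x) + log (R / r)` on unit vectors, since
`ρ_K(x) x ∈ K` gives `ρ_K(x) ⟨n, x⟩ ≤ h_K(n)`; equality holds exactly on the contact set
`h_K(n) = ρ_K(x) ⟨n, x⟩`. Additivity of the Gauss curvature measure forces the reverse radial
Gauss image of `σ`-a.e. `n` to be a single direction, that of the support point of `K` in
direction `n`, and the graph of this map is a plan with the prescribed marginals living on the
contact set. An optimal plan costs no more, so complementary slackness puts it on the contact set
too, where `r ≤ h_K(n) = ρ_K(x) ⟨n, x⟩ ≤ R ⟨n, x⟩`.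
-/

open Filter Topology Set

section Berge

variable {X Y : Type*} [TopologicalSpace X] [TopologicalSpace Y] {K : Set Y}
  {f : X → Y → ℝ} {m : X → Y}

theorem continuousAt_of_isMaxOn_unique (hK : IsCompact K) (hf : Continuous (Function.uncurry f))
    (hmK : ∀ x, m x ∈ K) (hm : ∀ x, IsMaxOn (f x) K (m x)) {x₀ : X}
    (huniq : ∀ y ∈ K, IsMaxOn (f x₀) K y → y = m x₀) : ContinuousAt m x₀ := by
  refine hK.tendsto_nhds_of_unique_mapClusterPt (Eventually.of_forall hmK)
    fun y hyK hy => huniq y hyK fun z hzK => ?_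
  by_contra hle
  have hlt : f x₀ y < f x₀ z := lt_of_not_ge hle
  have hopen : IsOpen {p : X × Y | f p.1 p.2 < f p.1 z} :=
    isOpen_lt hf (hf.comp (continuous_fst.prodMk continuous_const))
  obtain ⟨U, hU, V, hV, hUV⟩ := mem_nhds_prod_iff.mp (hopen.mem_nhds hlt)
  obtain ⟨x, hxV, hxU⟩ := ((mapClusterPt_iff_frequently.mp hy V hV).and_eventually hU).exists
  exact (hUV (mk_mem_prod hxU hxV) : f x (m x) < f x z).not_ge (isMaxOn_iff.mp (hm x) z hzK)

end Berge

section Measure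

variable {X Y : Type*} [MeasurableSpace X] [MeasurableSpace Y]

theorem aemeasurable_of_ae_continuousAt [TopologicalSpace X] [OpensMeasurableSpace X]
    [TopologicalSpace Y] [BorelSpace Y] {μ : Measure X} {f : X → Y}
    (hf : ∀ᵐ x ∂μ, ContinuousAt f x) : AEMeasurable f μ := by
  set G := (toMeasurable μ {x | ¬ContinuousAt f x})ᶜ
  have hGc : μ Gᶜ = 0 := by
    rw [compl_compl, measure_toMeasurable]; exact ae_iff.mp hf
  have hcont : ContinuousOn f G := fun x hx =>
    (not_not.mp fun h => hx (subset_toMeasurable μ _ h)).continuousWithinAt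
  rw [← Measure.restrict_eq_self_of_ae_mem (measure_eq_zero_iff_ae_notMem.mp hGc |>.mono
    fun x hx => not_not.mp hx)]
  exact hcont.aemeasurable (measurableSet_toMeasurable μ _).compl

theorem measure_inter_eq_zero_of_add_le_union {μ : Measure X} [IsFiniteMeasure μ] {A B : Set X}
    (h : μ A + μ B ≤ μ (A ∪ B)) : μ (A ∩ B) = 0 := by
  set A' := toMeasurable μ A
  set B' := toMeasurable μ B
  have hunion : μ (A' ∪ B') + μ (A' ∩ B') ≤ μ (A' ∪ B') + 0 := calc
    _ = μ A' + μ B' := measure_union_add_inter A' (measurableSet_toMeasurable μ B)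
    _ ≤ μ (A' ∪ B') := by
      rw [measure_toMeasurable, measure_toMeasurable]
      exact h.trans (measure_mono (union_subset_union (subset_toMeasurable μ A)
        (subset_toMeasurable μ B)))
    _ = _ := (add_zero _).symm
  refine measure_mono_null (inter_subset_inter (subset_toMeasurable μ A)
    (subset_toMeasurable μ B)) (nonpos_iff_eq_zero.mp ?_)
  exact (ENNReal.add_le_add_iff_left (measure_ne_top μ _)).mp hunion

theorem ae_subsingleton_of_forall_measure_eq [TopologicalSpace X] [T2Space X]
    [SecondCountableTopology X] [OpensMeasurableSpace X] {μ : Measure Y} [IsFiniteMeasure μ]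
    {ν : Measure X} {T : Y → Set X}
    (hν : ∀ A, MeasurableSet A → ν A = μ {y | ∃ x ∈ A, x ∈ T y}) :
    ∀ᵐ y ∂μ, (T y).Subsingleton := by
  set W : Set X → Set Y := fun A => {y | ∃ x ∈ A, x ∈ T y}
  have hW_union : ∀ A B, W (A ∪ B) = W A ∪ W B := fun A B => by
    ext y; simp only [W, mem_ofPred_eq, mem_union, or_and_right, exists_or]
  have hW_disjoint : ∀ U V, IsOpen U → IsOpen V → Disjoint U V → μ (W U ∩ W V) = 0 := by
    intro U V hU hV hUV
    refine measure_inter_eq_zero_of_add_le_union (le_of_eq ?_)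
    rw [← hν U hU.measurableSet, ← hν V hV.measurableSet, ← hW_union,
      ← hν _ (hU.union hV).measurableSet, measure_union hUV hV.measurableSet]
  obtain ⟨B, hBc, -, hB⟩ := TopologicalSpace.exists_countable_basis X
  set P := {UV : Set X × Set X | UV.1 ∈ B ∧ UV.2 ∈ B ∧ Disjoint UV.1 UV.2}
  have hPc : P.Countable := (hBc.prod hBc).mono fun UV hUV => mk_mem_prod hUV.1 hUV.2.1
  have hnull : μ (⋃ UV ∈ P, W UV.1 ∩ W UV.2) = 0 :=
    (measure_biUnion_null_iff hPc).mpr fun UV hUV =>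
      hW_disjoint _ _ (hB.isOpen hUV.1) (hB.isOpen hUV.2.1) hUV.2.2
  filter_upwards [measure_eq_zero_iff_ae_notMem.mp hnull] with y hy x₁ hx₁ x₂ hx₂
  by_contra hne
  obtain ⟨U', V', hU', hV', hxU', hxV', hUV'⟩ := t2_separation hne
  obtain ⟨U, hUB, hxU, hUU'⟩ := hB.exists_subset_of_mem_open hxU' hU'
  obtain ⟨V, hVB, hxV, hVV'⟩ := hB.exists_subset_of_mem_open hxV' hV'
  exact hy (mem_biUnion (show (U, V) ∈ P from ⟨hUB, hVB, hUV'.mono hUU' hVV'⟩)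
    ⟨⟨x₁, hxU, hx₁⟩, ⟨x₂, hxV, hx₂⟩⟩)

theorem map_eq_of_ae_eq_singleton {μ : Measure Y} {ν : Measure X} {T : Y → Set X} {s : Y → X}
    (hs : AEMeasurable s μ) (hν : ∀ A, MeasurableSet A → ν A = μ {y | ∃ x ∈ A, x ∈ T y})
    (hT : ∀ᵐ y ∂μ, T y = {s y}) : μ.map s = ν := by
  ext A hA
  rw [Measure.map_apply_of_aemeasurable hs hA, hν A hA]
  refine measure_congr (eventuallyEq_set.mpr ?_)
  filter_upwards [hT] with y hy
  simp [hy]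

theorem ae_mem_of_forall_measure_eq {μ : Measure Y} {ν : Measure X} {T : Y → Set X}
    (hν : ∀ A, MeasurableSet A → ν A = μ {y | ∃ x ∈ A, x ∈ T y}) {B : Set X}
    (hB : MeasurableSet B) (hTB : ∀ y, T y ⊆ B) : ∀ᵐ x ∂ν, x ∈ B := by
  rw [ae_iff, ← compl_def, hν _ hB.compl]
  convert measure_empty (μ := μ)
  exact eq_empty_of_forall_notMem fun y ⟨x, hxB, hxT⟩ => hxB (hTB y hxT)

theorem msupport_subset_of_ae_mem [TopologicalSpace X] {μ : Measure X} {C : Set X}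
    (hC : IsClosed C) (h : ∀ᵐ x ∂μ, x ∈ C) : msupport μ ⊆ C := fun x hx => by
  by_contra hxC
  exact (hx Cᶜ hC.isOpen_compl hxC).ne' (ae_iff.mp h)

theorem lintegral_add_comp_fst_snd (γ : Measure (X × Y)) {φ : X → ENNReal} {ψ : Y → ENNReal}
    (hφ : Measurable φ) (hψ : Measurable ψ) :
    ∫⁻ p, φ p.1 + ψ p.2 ∂γ = ∫⁻ x, φ x ∂γ.fst + ∫⁻ y, ψ y ∂γ.snd := by
  rw [lintegral_add_left (show Measurable fun p : X × Y => φ p.1 from hφ.comp measurable_fst),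
    Measure.fst, Measure.snd, lintegral_map hφ measurable_fst, lintegral_map hψ measurable_snd]

theorem ae_eq_of_dual_le_of_lintegral_le {γ γ' : Measure (X × Y)} (hfst : γ'.fst = γ.fst)
    (hsnd : γ'.snd = γ.snd) {c : X × Y → ENNReal} {φ : X → ENNReal} {ψ : Y → ENNReal}
    (hc : AEMeasurable c γ) (hφ : Measurable φ) (hψ : Measurable ψ)
    (hdual : ∀ᵐ p ∂γ, φ p.1 + ψ p.2 ≤ c p) (htight : ∀ᵐ p ∂γ', c p ≤ φ p.1 + ψ p.2)
    (hfin : ∫⁻ p, φ p.1 + ψ p.2 ∂γ ≠ ⊤) (hopt : ∫⁻ p, c p ∂γ ≤ ∫⁻ p, c p ∂γ') :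
    (fun p => φ p.1 + ψ p.2) =ᵐ[γ] c := by
  refine ae_eq_of_ae_le_of_lintegral_le hdual hfin hc ?_
  calc ∫⁻ p, c p ∂γ ≤ ∫⁻ p, c p ∂γ' := hopt
    _ ≤ ∫⁻ p, φ p.1 + ψ p.2 ∂γ' := lintegral_mono_ae htight
    _ = ∫⁻ p, φ p.1 + ψ p.2 ∂γ := by
      rw [lintegral_add_comp_fst_snd _ hφ hψ, lintegral_add_comp_fst_snd _ hφ hψ, hfst, hsnd]

theorem lintegral_add_const_le_of_fst_eq {γ γ' : Measure (X × Y)} (h : γ.fst = γ'.fst)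
    {c : X × Y → ENNReal} (hc : ∫⁻ p, c p ∂γ ≤ ∫⁻ p, c p ∂γ') (M : ENNReal) :
    ∫⁻ p, c p + M ∂γ ≤ ∫⁻ p, c p + M ∂γ' := by
  rw [lintegral_add_right _ measurable_const, lintegral_add_right _ measurable_const,
    lintegral_const, lintegral_const, ← Measure.fst_univ, h, Measure.fst_univ]
  gcongr

end Measure

section Gauge

variable {E : Type*} [NormedAddCommGroup E] [NormedSpace ℝ E] {K : Set E}

theorem isGreatest_inv_gauge (hKconv : Convex ℝ K) (hKcl : IsClosed K) (hK0 : K ∈ 𝓝 0)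
    (hKb : Bornology.IsBounded K) {x : E} (hx : x ≠ 0) :
    IsGreatest {s : ℝ | s • x ∈ K} (gauge K x)⁻¹ := by
  have hpos : 0 < gauge K x :=
    (gauge_pos (absorbent_nhds_zero hK0) (NormedSpace.isVonNBounded_of_isBounded ℝ hKb)).mpr hx
  refine ⟨?_, fun s hs => ?_⟩
  · have : gauge K ((gauge K x)⁻¹ • x) ≤ 1 := by
      rw [gauge_smul_of_nonneg (inv_nonneg.mpr hpos.le), smul_eq_mul,
        inv_mul_cancel₀ hpos.ne']
    rwa [gauge_le_one_iff_mem_closure hKconv hK0, hKcl.closure_eq] at this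
  · rcases le_or_gt s 0 with hs0 | hs0
    · exact hs0.trans (inv_nonneg.mpr hpos.le)
    · have : gauge K (s • x) ≤ 1 := gauge_le_one_of_mem hs
      rw [gauge_smul_of_nonneg hs0.le, smul_eq_mul] at this
      exact ((le_inv_mul_iff₀' hpos).mpr this).trans_eq (mul_one _)

end Gauge

section SupportFunction

variable {E : Type*} [NormedAddCommGroup E] [InnerProductSpace ℝ E] {K : Set E} {n y : E}

noncomputable def supportFn (K : Set E) (n : E) : ℝ :=
  sSup ((fun y => ⟪n, y⟫) '' K)

theorem continuous_supportFn (hK : IsCompact K) : Continuous (supportFn K) :=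
  hK.continuous_sSup continuous_inner

theorem supportFn_eq_inner_of_isMaxOn (hyK : y ∈ K) (hy : IsMaxOn (⟪n, ·⟫) K y) :
    supportFn K n = ⟪n, y⟫ :=
  IsGreatest.csSup_eq ⟨mem_image_of_mem _ hyK, forall_mem_image.2 fun _ hz => hy hz⟩

theorem inner_le_supportFn (hK : IsCompact K) (hyK : y ∈ K) : ⟪n, y⟫ ≤ supportFn K n :=
  le_csSup ((hK.image (continuous_const.inner continuous_id)).bddAbove) (mem_image_of_mem _ hyK)

theorem le_supportFn (hK : IsCompact K) {r : ℝ} (hr : 0 ≤ r) (hKr : Metric.closedBall 0 r ⊆ K)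
    (hn : ‖n‖ = 1) : r ≤ supportFn K n := by
  have hrn : r • n ∈ K := hKr (by simp [norm_smul, hn, abs_of_nonneg hr])
  simpa [real_inner_smul_right, real_inner_self_eq_norm_sq, hn] using
    inner_le_supportFn (n := n) hK hrn

theorem supportFn_le (hKne : K.Nonempty) {R : ℝ} (hKR : K ⊆ Metric.closedBall 0 R)
    (hn : ‖n‖ = 1) : supportFn K n ≤ R :=
  csSup_le (hKne.image _) <| forall_mem_image.2 fun z hz => calc
    ⟪n, z⟫ ≤ ‖n‖ * ‖z‖ := real_inner_le_norm n z
    _ ≤ R := by simpa [hn] using hKR hz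

theorem supportFn_mem_Icc (hK : IsCompact K) {r R : ℝ} (hr : 0 ≤ r)
    (hKr : Metric.closedBall 0 r ⊆ K) (hKR : K ⊆ Metric.closedBall 0 R) (hn : ‖n‖ = 1) :
    supportFn K n ∈ Icc r R :=
  ⟨le_supportFn hK hr hKr hn, supportFn_le ⟨0, hKr (Metric.mem_closedBall_self hr)⟩ hKR hn⟩

end SupportFunction

section RadialFunction

variable {d : ℕ} {K : Set (EuclideanSpace ℝ (Fin d))} {n x : EuclideanSpace ℝ (Fin d)}

theorem radialFn_eq_inv_gauge (hKconv : Convex ℝ K) (hKcl : IsClosed K) (hK0 : K ∈ 𝓝 0)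
    (hKb : Bornology.IsBounded K) : radialFn K = fun x => (gauge K x)⁻¹ := by
  funext x
  rcases eq_or_ne x 0 with rfl | hx
  -- both sides take the junk value `0` at the origin
  · have : {s : ℝ | s • (0 : EuclideanSpace ℝ (Fin d)) ∈ K} = univ := by
      simp [mem_of_mem_nhds hK0]
    rw [radialFn, this, Real.sSup_univ, gauge_zero, inv_zero]
  · exact (isGreatest_inv_gauge hKconv hKcl hK0 hKb hx).csSup_eq

theorem measurable_radialFn (hKconv : Convex ℝ K) (hKcl : IsClosed K) (hK0 : K ∈ 𝓝 0)
    (hKb : Bornology.IsBounded K) : Measurable (radialFn K) := by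
  rw [radialFn_eq_inv_gauge hKconv hKcl hK0 hKb]
  exact (continuous_gauge hKconv hK0).measurable.inv

theorem isGreatest_radialFn (hKconv : Convex ℝ K) (hKcl : IsClosed K) (hK0 : K ∈ 𝓝 0)
    (hKb : Bornology.IsBounded K) (hx : x ≠ 0) :
    IsGreatest {s : ℝ | s • x ∈ K} (radialFn K x) := by
  rw [radialFn_eq_inv_gauge hKconv hKcl hK0 hKb]
  exact isGreatest_inv_gauge hKconv hKcl hK0 hKb hx

theorem radialFn_mem_Icc (hKconv : Convex ℝ K) (hK : IsCompact K) {r R : ℝ} (hr : 0 < r)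
    (hKr : Metric.closedBall 0 r ⊆ K) (hKR : K ⊆ Metric.closedBall 0 R) (hx : ‖x‖ = 1) :
    radialFn K x ∈ Icc r R := by
  have hρ := isGreatest_radialFn hKconv hK.isClosed
    (mem_of_superset (Metric.closedBall_mem_nhds 0 hr) hKr) hK.isBounded
    (norm_ne_zero_iff.mp (hx.symm ▸ one_ne_zero))
  refine ⟨hρ.2 (hKr (by simp [norm_smul, hx, abs_of_pos hr])), ?_⟩
  have hρR := mem_closedBall_zero_iff.mp (hKR hρ.1)
  rw [norm_smul, hx, mul_one, Real.norm_eq_abs] at hρR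
  exact (le_abs_self _).trans hρR

theorem radialFn_mul_inner_le_supportFn (hKconv : Convex ℝ K) (hK : IsCompact K)
    (hK0 : K ∈ 𝓝 0) (hx : x ≠ 0) : radialFn K x * ⟪n, x⟫ ≤ supportFn K n := by
  rw [← real_inner_smul_right]
  exact inner_le_supportFn hK (isGreatest_radialFn hKconv hK.isClosed hK0 hK.isBounded hx).1

end RadialFunction

section ReverseRadialGaussImage

variable {d : ℕ} {K : Set (EuclideanSpace ℝ (Fin d))} {n x : EuclideanSpace ℝ (Fin d)}

/-- The unit directions `x` such that `n` is an outer normal of `K` at `ρ_K(x) x`. The Gauss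
curvature measure `ν A = σ (G_K (ρ⃗_K A))` is then
`σ {n | ∃ x ∈ A, x ∈ reverseRadialGaussImage K n}`. -/
def reverseRadialGaussImage (K : Set (EuclideanSpace ℝ (Fin d))) (n : EuclideanSpace ℝ (Fin d)) :
    Set (EuclideanSpace ℝ (Fin d)) :=
  {x | ‖x‖ = 1 ∧ ∀ y ∈ K, ⟪n, y⟫ ≤ radialFn K x * ⟪n, x⟫}

theorem radialFn_inv_norm_smul_of_isMaxOn (hxK : x ∈ K) (hx : IsMaxOn (⟪n, ·⟫) K x)
    (hpos : 0 < ⟪n, x⟫) : radialFn K (‖x‖⁻¹ • x) = ‖x‖ := by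
  have hnx : 0 < ‖x‖ := norm_pos_iff.mpr (by rintro rfl; simp at hpos)
  refine IsGreatest.csSup_eq ⟨?_, fun s hs => ?_⟩
  · simpa [smul_smul, mul_inv_cancel₀ hnx.ne'] using hxK
  · have hle : s * ‖x‖⁻¹ * ⟪n, x⟫ ≤ 1 * ⟪n, x⟫ := by
      simpa [real_inner_smul_right, mul_assoc] using isMaxOn_iff.mp hx _ hs
    simpa using (mul_inv_le_iff₀ hnx).mp (le_of_mul_le_mul_right hle hpos)

theorem inv_norm_smul_mem_reverseRadialGaussImage (hxK : x ∈ K) (hx : IsMaxOn (⟪n, ·⟫) K x)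
    (hpos : 0 < ⟪n, x⟫) : ‖x‖⁻¹ • x ∈ reverseRadialGaussImage K n := by
  have hnx : ‖x‖ ≠ 0 := norm_ne_zero_iff.mpr (by rintro rfl; simp at hpos)
  refine ⟨norm_smul_inv_norm (norm_ne_zero_iff.mp hnx), fun y hy => ?_⟩
  rw [radialFn_inv_norm_smul_of_isMaxOn hxK hx hpos, real_inner_smul_right, ← mul_assoc,
    mul_inv_cancel₀ hnx, one_mul]
  exact hx hy

theorem supportFn_le_of_mem_reverseRadialGaussImage (hKne : K.Nonempty)
    (hx : x ∈ reverseRadialGaussImage K n) : supportFn K n ≤ radialFn K x * ⟪n, x⟫ :=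
  csSup_le (hKne.image _) (forall_mem_image.2 hx.2)

theorem eq_of_isMaxOn_of_subsingleton (hT : (reverseRadialGaussImage K n).Subsingleton)
    {x₁ x₂ : EuclideanSpace ℝ (Fin d)} (hx₁K : x₁ ∈ K) (hx₁ : IsMaxOn (⟪n, ·⟫) K x₁)
    (hpos₁ : 0 < ⟪n, x₁⟫) (hx₂K : x₂ ∈ K) (hx₂ : IsMaxOn (⟪n, ·⟫) K x₂) : x₁ = x₂ := by
  have hpos₂ : 0 < ⟪n, x₂⟫ := hpos₁.trans_le (hx₂ hx₁K)
  have hdir := hT (inv_norm_smul_mem_reverseRadialGaussImage hx₁K hx₁ hpos₁)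
    (inv_norm_smul_mem_reverseRadialGaussImage hx₂K hx₂ hpos₂)
  have hnorm : ‖x₁‖ = ‖x₂‖ := by
    rw [← radialFn_inv_norm_smul_of_isMaxOn hx₁K hx₁ hpos₁, hdir,
      radialFn_inv_norm_smul_of_isMaxOn hx₂K hx₂ hpos₂]
  rw [hnorm] at hdir
  exact smul_right_injective _ (inv_ne_zero (norm_ne_zero_iff.mpr (by rintro rfl; simp at hpos₂)))
    hdir

end ReverseRadialGaussImage

section GaussCost

variable {d : ℕ} {n x : EuclideanSpace ℝ (Fin d)} {r R h ρ : ℝ}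

theorem measurable_gaussCost :
    Measurable fun p : EuclideanSpace ℝ (Fin d) × EuclideanSpace ℝ (Fin d) =>
      gaussCost p.1 p.2 := by
  unfold gaussCost
  exact Measurable.ite (measurableSet_le continuous_inner.measurable measurable_const)
    measurable_const (Real.measurable_log.comp continuous_inner.measurable).neg.ennreal_ofReal

theorem ofReal_log_add_le_gaussCost_add (hr : 0 < r) (hh : h ∈ Icc r R) (hrρ : r ≤ ρ)
    (hle : ρ * ⟪n, x⟫ ≤ h) :
    ENNReal.ofReal (Real.log (R / h)) + ENNReal.ofReal (Real.log (ρ / r)) ≤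
      gaussCost n x + ENNReal.ofReal (Real.log (R / r)) := by
  obtain ⟨hrh, hhR⟩ := hh
  have hh : 0 < h := hr.trans_le hrh
  have hρ : 0 < ρ := hr.trans_le hrρ
  have hR : 0 < R := hh.trans_le hhR
  unfold gaussCost
  split_ifs with ht
  · simp
  replace ht := not_le.mp ht
  rw [← ENNReal.ofReal_add (Real.log_nonneg ((one_le_div hh).mpr hhR))
    (Real.log_nonneg ((one_le_div hr).mpr hrρ))]
  refine (ENNReal.ofReal_le_ofReal ?_).trans ENNReal.ofReal_add_le
  have hlog := Real.log_le_log (mul_pos hρ ht) hle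
  rw [Real.log_mul hρ.ne' ht.ne'] at hlog
  rw [Real.log_div hR.ne' hh.ne', Real.log_div hρ.ne' hr.ne', Real.log_div hR.ne' hr.ne']
  linarith

theorem gaussCost_add_le_ofReal_log_add_iff (hr : 0 < r) (hh : h ∈ Icc r R) (hrρ : r ≤ ρ)
    (hx : ⟪n, x⟫ ≤ 1) :
    gaussCost n x + ENNReal.ofReal (Real.log (R / r)) ≤
        ENNReal.ofReal (Real.log (R / h)) + ENNReal.ofReal (Real.log (ρ / r)) ↔
      h ≤ ρ * ⟪n, x⟫ := by
  obtain ⟨hrh, hhR⟩ := hh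
  have hh : 0 < h := hr.trans_le hrh
  have hρ : 0 < ρ := hr.trans_le hrρ
  have hR : 0 < R := hh.trans_le hhR
  have ha : 0 ≤ Real.log (R / h) := Real.log_nonneg ((one_le_div hh).mpr hhR)
  have hb : 0 ≤ Real.log (ρ / r) := Real.log_nonneg ((one_le_div hr).mpr hrρ)
  rw [← ENNReal.ofReal_add ha hb]
  unfold gaussCost
  split_ifs with ht
  · simp only [top_add, top_le_iff, ENNReal.ofReal_ne_top, false_iff, not_le]
    exact (mul_nonpos_of_nonneg_of_nonpos hρ.le ht).trans_lt hh
  replace ht := not_le.mp ht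
  rw [← ENNReal.ofReal_add (neg_nonneg.mpr (Real.log_nonpos ht.le hx))
      (Real.log_nonneg ((one_le_div hr).mpr (hrh.trans hhR))),
    ENNReal.ofReal_le_ofReal_iff (add_nonneg ha hb), ← Real.log_le_log_iff hh (mul_pos hρ ht),
    Real.log_mul hρ.ne' ht.ne', Real.log_div hR.ne' hh.ne', Real.log_div hρ.ne' hr.ne',
    Real.log_div hR.ne' hr.ne']
  constructor <;> intro <;> linarith

end GaussCost

section GaussPotentials

variable {d : ℕ} {K : Set (EuclideanSpace ℝ (Fin d))} {n x : EuclideanSpace ℝ (Fin d)} {r R : ℝ}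

/-- The Kantorovich potential `-log h_K`, shifted by `log R` to be nonnegative on the sphere. -/
noncomputable def supportPotential (K : Set (EuclideanSpace ℝ (Fin d))) (R : ℝ)
    (n : EuclideanSpace ℝ (Fin d)) : ENNReal :=
  ENNReal.ofReal (Real.log (R / supportFn K n))

/-- The Kantorovich potential `log ρ_K`, shifted by `-log r` to be nonnegative on the sphere. -/
noncomputable def radialPotential (K : Set (EuclideanSpace ℝ (Fin d))) (r : ℝ)
    (x : EuclideanSpace ℝ (Fin d)) : ENNReal :=
  ENNReal.ofReal (Real.log (radialFn K x / r))

theorem measurable_supportPotential (hK : IsCompact K) (R : ℝ) :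
    Measurable (supportPotential K R) :=
  (Real.measurable_log.comp
    (measurable_const.div (continuous_supportFn hK).measurable)).ennreal_ofReal

theorem measurable_radialPotential (hKconv : Convex ℝ K) (hK : IsCompact K) (hK0 : K ∈ 𝓝 0)
    (r : ℝ) : Measurable (radialPotential K r) :=
  (Real.measurable_log.comp ((measurable_radialFn hKconv hK.isClosed hK0 hK.isBounded).div_const
    r)).ennreal_ofReal

theorem supportPotential_le (hK : IsCompact K) (hr : 0 < r) (hKr : Metric.closedBall 0 r ⊆ K)
    (hKR : K ⊆ Metric.closedBall 0 R) (hn : ‖n‖ = 1) :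
    supportPotential K R n ≤ ENNReal.ofReal (Real.log (R / r)) := by
  obtain ⟨hrh, hhR⟩ := supportFn_mem_Icc hK hr.le hKr hKR hn
  have hR : 0 < R := hr.trans_le (hrh.trans hhR)
  exact ENNReal.ofReal_le_ofReal (Real.log_le_log (div_pos hR (hr.trans_le hrh))
    (div_le_div_of_nonneg_left hR.le hr hrh))

theorem radialPotential_le (hKconv : Convex ℝ K) (hK : IsCompact K) (hr : 0 < r)
    (hKr : Metric.closedBall 0 r ⊆ K) (hKR : K ⊆ Metric.closedBall 0 R) (hx : ‖x‖ = 1) :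
    radialPotential K r x ≤ ENNReal.ofReal (Real.log (R / r)) := by
  obtain ⟨hrρ, hρR⟩ := radialFn_mem_Icc hKconv hK hr hKr hKR hx
  exact ENNReal.ofReal_le_ofReal (Real.log_le_log (div_pos (hr.trans_le hrρ) hr)
    (div_le_div_of_nonneg_right hρR hr.le))

theorem supportPotential_add_radialPotential_le (hKconv : Convex ℝ K) (hK : IsCompact K)
    (hr : 0 < r) (hKr : Metric.closedBall 0 r ⊆ K) (hKR : K ⊆ Metric.closedBall 0 R)
    (hn : ‖n‖ = 1) (hx : ‖x‖ = 1) :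
    supportPotential K R n + radialPotential K r x ≤
      gaussCost n x + ENNReal.ofReal (Real.log (R / r)) :=
  ofReal_log_add_le_gaussCost_add hr (supportFn_mem_Icc hK hr.le hKr hKR hn)
    (radialFn_mem_Icc hKconv hK hr hKr hKR hx).1
    (radialFn_mul_inner_le_supportFn hKconv hK (mem_of_superset
      (Metric.closedBall_mem_nhds 0 hr) hKr) (norm_ne_zero_iff.mp (by simp [hx])))

theorem gaussCost_add_le_supportPotential_add_radialPotential_iff (hKconv : Convex ℝ K)
    (hK : IsCompact K) (hr : 0 < r) (hKr : Metric.closedBall 0 r ⊆ K)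
    (hKR : K ⊆ Metric.closedBall 0 R) (hn : ‖n‖ = 1) (hx : ‖x‖ = 1) :
    gaussCost n x + ENNReal.ofReal (Real.log (R / r)) ≤
        supportPotential K R n + radialPotential K r x ↔
      supportFn K n ≤ radialFn K x * ⟪n, x⟫ :=
  gaussCost_add_le_ofReal_log_add_iff hr (supportFn_mem_Icc hK hr.le hKr hKR hn)
    (radialFn_mem_Icc hKconv hK hr hKr hKR hx).1
    ((real_inner_le_norm n x).trans (by rw [hn, hx, one_mul]))

end GaussPotentials

section UniformSphere

variable {d : ℕ}

instance isFiniteMeasure_uniformSphere : IsFiniteMeasure (uniformSphere d) :=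
  ⟨by
    rw [uniformSphere, Measure.smul_apply, Measure.restrict_apply_univ, smul_eq_mul]
    exact (ENNReal.inv_mul_le_one _).trans_lt ENNReal.one_lt_top⟩

theorem ae_norm_eq_one_uniformSphere : ∀ᵐ n ∂uniformSphere d, ‖n‖ = 1 :=
  Measure.ae_smul_measure ((ae_restrict_mem Metric.isClosed_sphere.measurableSet).mono
    fun _ hn => mem_sphere_zero_iff_norm.mp hn) _

end UniformSphere

section GaussPlan

variable {d : ℕ} {K : Set (EuclideanSpace ℝ (Fin d))} {ν : Measure (EuclideanSpace ℝ (Fin d))}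

theorem ae_norm_eq_one_of_marginals
    (hν : ∀ A, MeasurableSet A →
      ν A = uniformSphere d {n | ∃ x ∈ A, x ∈ reverseRadialGaussImage K n})
    {γ : Measure (EuclideanSpace ℝ (Fin d) × EuclideanSpace ℝ (Fin d))}
    (hfst : γ.fst = uniformSphere d) (hsnd : γ.snd = ν) :
    ∀ᵐ p ∂γ, ‖p.1‖ = 1 ∧ ‖p.2‖ = 1 := by
  have h₁ : ∀ᵐ n ∂γ.fst, ‖n‖ = 1 := hfst ▸ ae_norm_eq_one_uniformSphere
  have h₂ : ∀ᵐ x ∂γ.snd, ‖x‖ = 1 := hsnd ▸ ae_mem_of_forall_measure_eq hν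
    (measurableSet_eq_fun measurable_norm measurable_const) fun _ _ hx => hx.1
  exact (ae_of_ae_map measurable_fst.aemeasurable h₁).and
    (ae_of_ae_map measurable_snd.aemeasurable h₂)

theorem exists_aemeasurable_ae_reverseRadialGaussImage_eq_singleton (hKcpt : IsCompact K) {r : ℝ}
    (hr : 0 < r) (hKr : Metric.closedBall 0 r ⊆ K)
    (hν : ∀ A, MeasurableSet A →
      ν A = uniformSphere d {n | ∃ x ∈ A, x ∈ reverseRadialGaussImage K n}) :
    ∃ s : EuclideanSpace ℝ (Fin d) → EuclideanSpace ℝ (Fin d), AEMeasurable s (uniformSphere d) ∧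
      ∀ᵐ n ∂uniformSphere d, reverseRadialGaussImage K n = {s n} := by
  choose m hmK hm using fun n : EuclideanSpace ℝ (Fin d) =>
    hKcpt.exists_isMaxOn ⟨0, hKr (Metric.mem_closedBall_self hr.le)⟩
      (continuous_const.inner continuous_id : Continuous (⟪n, ·⟫)).continuousOn
  have hgood : ∀ᵐ n ∂uniformSphere d,
      0 < ⟪n, m n⟫ ∧ (reverseRadialGaussImage K n).Subsingleton := by
    filter_upwards [ae_norm_eq_one_uniformSphere, ae_subsingleton_of_forall_measure_eq hν]
      with n hn hT
    rw [← supportFn_eq_inner_of_isMaxOn (hmK n) (hm n)]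
    exact ⟨hr.trans_le (le_supportFn hKcpt hr.le hKr hn), hT⟩
  have hm_ae : AEMeasurable m (uniformSphere d) := by
    refine aemeasurable_of_ae_continuousAt (hgood.mono fun n ⟨hpos, hT⟩ => ?_)
    exact continuousAt_of_isMaxOn_unique hKcpt continuous_inner hmK hm fun y hyK hy =>
      (eq_of_isMaxOn_of_subsingleton hT (hmK n) (hm n) hpos hyK hy).symm
  refine ⟨fun n => ‖m n‖⁻¹ • m n, hm_ae.norm.inv.smul hm_ae, hgood.mono fun n ⟨hpos, hT⟩ => ?_⟩
  exact hT.eq_singleton_of_mem (inv_norm_smul_mem_reverseRadialGaussImage (hmK n) (hm n) hpos)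

theorem exists_marginals_ae_supportFn_le_radialFn_mul_inner (hKconv : Convex ℝ K)
    (hKcpt : IsCompact K) {r : ℝ} (hr : 0 < r) (hKr : Metric.closedBall 0 r ⊆ K)
    (hν : ∀ A, MeasurableSet A →
      ν A = uniformSphere d {n | ∃ x ∈ A, x ∈ reverseRadialGaussImage K n}) :
    ∃ γ' : Measure (EuclideanSpace ℝ (Fin d) × EuclideanSpace ℝ (Fin d)),
      γ'.fst = uniformSphere d ∧ γ'.snd = ν ∧
      ∀ᵐ p ∂γ', supportFn K p.1 ≤ radialFn K p.2 * ⟪p.1, p.2⟫ := by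
  have hK0 : K ∈ 𝓝 0 := mem_of_superset (Metric.closedBall_mem_nhds 0 hr) hKr
  obtain ⟨s, hs, hT⟩ := exists_aemeasurable_ae_reverseRadialGaussImage_eq_singleton hKcpt hr hKr hν
  refine ⟨(uniformSphere d).map fun n => (n, s n), by rw [Measure.fst_map_prodMk₀ hs,
    Measure.map_id'], by rw [Measure.snd_map_prodMk₀ aemeasurable_id',
    map_eq_of_ae_eq_singleton hs hν hT], ?_⟩
  refine (ae_map_iff (aemeasurable_id'.prodMk hs) (measurableSet_le
    ((continuous_supportFn hKcpt).measurable.comp measurable_fst)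
    (((measurable_radialFn hKconv hKcpt.isClosed hK0 hKcpt.isBounded).comp measurable_snd).mul
      continuous_inner.measurable))).mpr ?_
  filter_upwards [hT] with n hn
  exact supportFn_le_of_mem_reverseRadialGaussImage ⟨0, mem_of_mem_nhds hK0⟩
    (hn ▸ mem_singleton (s n))

theorem ae_supportFn_le_radialFn_mul_inner_of_lintegral_le (hKconv : Convex ℝ K)
    (hKcpt : IsCompact K) {r R : ℝ} (hr : 0 < r) (hKr : Metric.closedBall 0 r ⊆ K)
    (hKR : K ⊆ Metric.closedBall 0 R)
    (hν : ∀ A, MeasurableSet A →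
      ν A = uniformSphere d {n | ∃ x ∈ A, x ∈ reverseRadialGaussImage K n})
    {γ γ' : Measure (EuclideanSpace ℝ (Fin d) × EuclideanSpace ℝ (Fin d))}
    (hfst : γ.fst = uniformSphere d) (hsnd : γ.snd = ν) (hfst' : γ'.fst = uniformSphere d)
    (hsnd' : γ'.snd = ν) (hγ' : ∀ᵐ p ∂γ', supportFn K p.1 ≤ radialFn K p.2 * ⟪p.1, p.2⟫)
    (hopt : ∫⁻ p, gaussCost p.1 p.2 ∂γ ≤ ∫⁻ p, gaussCost p.1 p.2 ∂γ') :
    ∀ᵐ p ∂γ, supportFn K p.1 ≤ radialFn K p.2 * ⟪p.1, p.2⟫ := by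
  set M := ENNReal.ofReal (Real.log (R / r))
  have hunit := ae_norm_eq_one_of_marginals hν hfst hsnd
  have hfin : ∫⁻ p, supportPotential K R p.1 + radialPotential K r p.2 ∂γ ≠ ⊤ := by
    refine ne_top_of_le_ne_top (b := ∫⁻ _, M + M ∂γ) ?_ (lintegral_mono_ae ?_)
    · rw [lintegral_const, ← Measure.fst_univ, hfst]
      exact ENNReal.mul_ne_top (by simp [M]) (measure_ne_top _ _)
    · filter_upwards [hunit] with p hp
      exact add_le_add (supportPotential_le hKcpt hr hKr hKR hp.1)
        (radialPotential_le hKconv hKcpt hr hKr hKR hp.2)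
  have hslack : (fun p => supportPotential K R p.1 + radialPotential K r p.2) =ᵐ[γ]
      fun p => gaussCost p.1 p.2 + M :=
    ae_eq_of_dual_le_of_lintegral_le (hfst'.trans hfst.symm) (hsnd'.trans hsnd.symm)
      (measurable_gaussCost.add_const M).aemeasurable (measurable_supportPotential hKcpt R)
      (measurable_radialPotential hKconv hKcpt
        (mem_of_superset (Metric.closedBall_mem_nhds 0 hr) hKr) r)
      (hunit.mono fun p hp =>
        supportPotential_add_radialPotential_le hKconv hKcpt hr hKr hKR hp.1 hp.2)
      (((ae_norm_eq_one_of_marginals hν hfst' hsnd').and hγ').mono fun p hp =>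
        (gaussCost_add_le_supportPotential_add_radialPotential_iff hKconv hKcpt hr hKr hKR
          hp.1.1 hp.1.2).mpr hp.2)
      hfin (lintegral_add_const_le_of_fst_eq (hfst.trans hfst'.symm) hopt M)
  filter_upwards [hslack, hunit] with p hp hpu
  exact (gaussCost_add_le_supportPotential_add_radialPotential_iff hKconv hKcpt hr hKr hKR
    hpu.1 hpu.2).mp hp.symm.le

end GaussPlan

theorem gauss_optimal_plan_support_general {d : ℕ} (K : Set (EuclideanSpace ℝ (Fin d)))
    (hKconv : Convex ℝ K) (hKcpt : IsCompact K)
    (r R : ℝ) (hr : 0 < r)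
    (hKr : Metric.closedBall 0 r ⊆ K) (hKR : K ⊆ Metric.closedBall 0 R)
    (ν : Measure (EuclideanSpace ℝ (Fin d)))
    -- `ν` is the Gauss curvature measure of `K`:
    -- `ν(A) = σ(G_K ∘ ρ⃗_K (A))` for every Borel set `A`
    (hν : ∀ A : Set (EuclideanSpace ℝ (Fin d)), MeasurableSet A →
      ν A = uniformSphere d
        {n | ∃ x ∈ A, ‖x‖ = 1 ∧ ∀ y ∈ K, ⟪n, y⟫ ≤ radialFn K x * ⟪n, x⟫})
    (γ : Measure (EuclideanSpace ℝ (Fin d) × EuclideanSpace ℝ (Fin d)))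
    (hγ : γ.fst = uniformSphere d ∧ γ.snd = ν)
    (hopt : ∀ γ' : Measure (EuclideanSpace ℝ (Fin d) × EuclideanSpace ℝ (Fin d)),
      γ'.fst = uniformSphere d → γ'.snd = ν →
      (∫⁻ p, gaussCost p.1 p.2 ∂γ) ≤ ∫⁻ p, gaussCost p.1 p.2 ∂γ') :
    ∀ p ∈ msupport γ, r / R ≤ ⟪p.1, p.2⟫ := by
  obtain ⟨γ', hfst', hsnd', hγ'⟩ :=
    exists_marginals_ae_supportFn_le_radialFn_mul_inner hKconv hKcpt hr hKr hν
  have hcontact := ae_supportFn_le_radialFn_mul_inner_of_lintegral_le hKconv hKcpt hr hKr hKR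
    hν hγ.1 hγ.2 hfst' hsnd' hγ' (hopt γ' hfst' hsnd')
  refine msupport_subset_of_ae_mem
    (C := {p : EuclideanSpace ℝ (Fin d) × EuclideanSpace ℝ (Fin d) | r / R ≤ ⟪p.1, p.2⟫})
    (isClosed_le continuous_const continuous_inner) ?_
  filter_upwards [hcontact, ae_norm_eq_one_of_marginals hν hγ.1 hγ.2] with p hp hpu
  have hh : r ≤ supportFn K p.1 := le_supportFn hKcpt hr.le hKr hpu.1
  have hρ := radialFn_mem_Icc hKconv hKcpt hr hKr hKR hpu.2
  have ht : 0 < ⟪p.1, p.2⟫ :=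
    pos_of_mul_pos_right (hr.trans_le (hh.trans hp)) (hr.trans_le hρ.1).le
  rw [div_le_iff₀ (hr.trans_le (hρ.1.trans hρ.2))]
  calc r ≤ supportFn K p.1 := hh
    _ ≤ radialFn K p.2 * ⟪p.1, p.2⟫ := hp
    _ ≤ ⟪p.1, p.2⟫ * R := by rw [mul_comm]; gcongr; exact hρ.2

/-- Every optimal transport plan between the uniform measure `σ` on the sphere and the Gauss
curvature measure `μ_K` of a convex body `K` with `B(0,r) ⊆ K ⊆ B(0,R)`, for the cost
`c(x,n) = -ln(max(0,⟨x,n⟩))`, satisfies `⟨x,n⟩ ≥ r/R` on its support (equivalently, it is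
supported on `D_ε = {(x,n) : d(x,n) ≤ π/2 - ε}` with `ε = π/2 - arccos(r/R)`). -/
theorem gauss_optimal_plan_support {d : ℕ} (K : Set (EuclideanSpace ℝ (Fin d)))
    (hKconv : Convex ℝ K) (hKcpt : IsCompact K)
    (r R : ℝ) (hr : 0 < r) (hrR : r < R)
    (hKr : Metric.closedBall 0 r ⊆ K) (hKR : K ⊆ Metric.closedBall 0 R)
    (ν : Measure (EuclideanSpace ℝ (Fin d)))
    -- `ν` is the Gauss curvature measure of `K`:
    -- `ν(A) = σ(G_K ∘ ρ⃗_K (A))` for every Borel set `A`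
    (hν : ∀ A : Set (EuclideanSpace ℝ (Fin d)), MeasurableSet A →
      ν A = uniformSphere d
        {n | ∃ x ∈ A, ‖x‖ = 1 ∧ ∀ y ∈ K, ⟪n, y⟫ ≤ radialFn K x * ⟪n, x⟫})
    (γ : Measure (EuclideanSpace ℝ (Fin d) × EuclideanSpace ℝ (Fin d)))
    (hγ : γ.fst = uniformSphere d ∧ γ.snd = ν)
    (hopt : ∀ γ' : Measure (EuclideanSpace ℝ (Fin d) × EuclideanSpace ℝ (Fin d)),
      γ'.fst = uniformSphere d → γ'.snd = ν →
      (∫⁻ p, gaussCost p.1 p.2 ∂γ) ≤ ∫⁻ p, gaussCost p.1 p.2 ∂γ') :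
    ∀ p ∈ msupport γ, r / R ≤ ⟪p.1, p.2⟫ :=
  gauss_optimal_plan_support_general K hKconv hKcpt r R hr hKr hKR ν hν γ hγ hopt
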